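/- arXiv:1010.5651 — 4 statements merged into one kernel-verified Lean document; each statement's English description precedes it below -/
import Mathlib

section
/- Let p be an odd prime, q ≥ 1, and D = p^q + 1. For any integer d ≥ 3, the integer 2·∑_{i=0}^{D-1}(d-1)^i − 4 is not divisible by p. Consequently (D−1) does not divide 2·∑_{i=0}^{D-1}(d-1)^i − 4. -/
/-!
Write `a` for the residue of `d - 1` in `𝔽_p` and `S = ∑_{i ≤ p^q} a^i`. Since `a^(p^q) = a`,
`(a - 1) S = a^(p^q + 1) - 1 = a² - 1`, so `S = a + 1` when `a ≠ 1` and `2S - 4 = 2(a - 1) ≠ 0`;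
when `a = 1`, `S = p^q + 1 = 1` in `𝔽_p` and `2S - 4 = -2 ≠ 0`.
-/

open Finset

namespace FiniteField

variable {K : Type*} [Field K] [Fintype K]

theorem geom_sum_card_pow_succ_of_ne_one {a : K} (ha : a ≠ 1) (n : ℕ) :
    ∑ i ∈ range (Fintype.card K ^ n + 1), a ^ i = a + 1 := by
  refine mul_right_cancel₀ (sub_ne_zero.2 ha) ?_
  rw [geom_sum_mul, pow_succ, pow_card_pow]
  ring

theorem two_mul_geom_sum_card_pow_succ_sub_four_ne_zero (hK : ringChar K ≠ 2) (a : K)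
    {n : ℕ} (hn : n ≠ 0) :
    2 * ∑ i ∈ range (Fintype.card K ^ n + 1), a ^ i - 4 ≠ 0 := by
  have h2 : (2 : K) ≠ 0 := Ring.two_ne_zero hK
  by_cases ha : a = 1
  · have hcard : ((Fintype.card K ^ n + 1 : ℕ) : K) = 1 := by
      simp [zero_pow hn]
    simp only [ha, one_pow, sum_const, card_range, nsmul_eq_mul, mul_one, hcard]
    rw [show (2 : K) - 4 = -2 by ring]
    exact neg_ne_zero.2 h2
  · rw [geom_sum_card_pow_succ_of_ne_one ha, show 2 * (a + 1) - 4 = 2 * (a - 1) by ring]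
    exact mul_ne_zero h2 (sub_ne_zero.2 ha)

end FiniteField

/-- Let `p` be an odd prime, `q ≥ 1`, `D = p^q + 1`. For any `d ≥ 3`,
`2·∑_{i<D}(d-1)^i − 4` is not divisible by `p`, hence not by `D−1`. -/
theorem stmt1 (p q d D : ℕ) (hp : p.Prime) (hodd : Odd p) (hq : 1 ≤ q)
    (hD : D = p ^ q + 1) (hd : 3 ≤ d) :
    ¬ p ∣ (2 * ∑ i ∈ Finset.range D, (d - 1) ^ i - 4) ∧
    ¬ (D - 1) ∣ (2 * ∑ i ∈ Finset.range D, (d - 1) ^ i - 4) := by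
  have : Fact p.Prime := ⟨hp⟩
  have hS : 2 ≤ ∑ i ∈ range D, (d - 1) ^ i := by
    have hD2 : 2 ≤ D := by have := Nat.one_le_pow q p hp.pos; omega
    calc 2 ≤ #(range D) • 1 := by simpa using hD2
      _ ≤ _ := card_nsmul_le_sum _ _ _ fun i _ => Nat.one_le_pow _ _ (by omega)
  have hchar : ringChar (ZMod p) ≠ 2 := by
    rw [ZMod.ringChar_zmod_n]
    exact hodd.ne_two_of_dvd_nat dvd_rfl
  have not_dvd_p : ¬ p ∣ (2 * ∑ i ∈ range D, (d - 1) ^ i - 4) := by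
    rw [← ZMod.natCast_eq_zero_iff, Nat.cast_sub (by omega)]
    push_cast
    have := FiniteField.two_mul_geom_sum_card_pow_succ_sub_four_ne_zero hchar
      ((d - 1 : ℕ) : ZMod p) (n := q) (by omega)
    rwa [ZMod.card, ← hD] at this
  refine ⟨not_dvd_p, fun h => not_dvd_p (dvd_trans (dvd_pow_self p (by omega : q ≠ 0)) ?_)⟩
  simpa [hD] using h
end

section
/- For all integers d ≥ 3 and D ≥ 5 with D ≡ 1 (mod 3), the integer 2·∑_{i=0}^{D-1}(d-1)^i − 4 is not divisible by 3. -/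
/-!
Modulo 3 the ratio `d - 1` is `0`, `1` or `-1`, so the geometric sum `S = ∑_{i<D} (d-1)^i` is
congruent to `1`, `D ≡ 1` or `0`/`1` (according to the parity of `D`). Hence `S ≢ 2`, whereas
`3 ∣ 2S - 4` would force `S ≡ 2 (mod 3)`.
-/

open Finset

theorem geom_sum_zmod_three_ne_two (x : ZMod 3) {D : ℕ} (hD : (D : ZMod 3) = 1) :
    ∑ i ∈ range D, x ^ i ≠ 2 := by
  have hD0 : D ≠ 0 := by rintro rfl; exact absurd hD (by decide)
  obtain rfl | rfl | rfl : x = 0 ∨ x = 1 ∨ x = -1 := by revert x; decide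
  · rw [zero_geom_sum, if_neg hD0]; decide
  · simp only [one_pow, sum_const, card_range, nsmul_eq_mul, mul_one, hD]; decide
  · rw [neg_one_geom_sum]; split_ifs <;> decide

theorem le_geom_sum {b : ℕ} (hb : 1 ≤ b) (D : ℕ) : D ≤ ∑ i ∈ range D, b ^ i := by
  simpa using card_nsmul_le_sum (range D) (b ^ ·) 1 fun i _ => Nat.one_le_pow i b hb

/-- For all `d ≥ 3` and `D ≥ 5` with `D ≡ 1 (mod 3)`,
`2·∑_{i<D}(d-1)^i − 4` is not divisible by `3`. -/
theorem stmt2 (d D : ℕ) (hd : 3 ≤ d) (hD : 5 ≤ D) (hmod : D % 3 = 1) :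
    ¬ (3 : ℕ) ∣ (2 * ∑ i ∈ Finset.range D, (d - 1) ^ i - 4) := by
  set S := ∑ i ∈ range D, (d - 1) ^ i with hS
  -- `2 * S ≥ 4`, so the natural subtraction `2 * S - 4` does not truncate
  have hSD : D ≤ S := le_geom_sum (by omega) D
  intro hdvd
  have hS3 : S % 3 = 2 := by omega
  have hDcast : (D : ZMod 3) = 1 := by rw [← ZMod.natCast_mod, hmod, Nat.cast_one]
  apply geom_sum_zmod_three_ne_two ((d - 1 : ℕ) : ZMod 3) hDcast
  have hScast : (S : ZMod 3) = 2 := by rw [← ZMod.natCast_mod, hS3, Nat.cast_ofNat]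
  simpa [hS] using hScast
end

section
/- For Δ ≥ 2 and 1 ≤ ε ≤ Δ−1, the complete bipartite graph K_{Δ,Δ−ε} has maximum degree Δ, diameter 2, and order M^b(Δ,2) − ε = 2Δ − ε; moreover these are the only bipartite (Δ,2,−ε)-graphs for 1 ≤ ε ≤ Δ−1. -/
/-!
In a bipartite graph of diameter 2, two vertices of different colours are joined by a walk of odd
length at most 2, so they are adjacent and the graph is complete bipartite. A vertex of maximum
degree `Δ` is adjacent to the whole opposite colour class, which therefore has `Δ` vertices; its
own class has the remaining `(2Δ - ε) - Δ = Δ - ε`.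
-/

namespace SimpleGraph

variable {V W : Type*}

theorem edist_le_two_of_adj_of_adj {G : SimpleGraph V} {u v w : V} (huw : G.Adj u w)
    (hwv : G.Adj w v) : G.edist u v ≤ 2 :=
  (edist_le (.cons huw (.cons hwv .nil))).trans_eq rfl

theorem Coloring.adj_of_ne_of_dist_le_two {G : SimpleGraph V} (C : G.Coloring Bool) {u v : V}
    (huv : C u ≠ C v) (hr : G.Reachable u v) (hd : G.dist u v ≤ 2) : G.Adj u v := by
  obtain ⟨p, hp⟩ := hr.exists_walk_length_eq_dist
  have hodd : Odd p.length :=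
    (C.odd_length_iff_not_congr p).mpr (by simpa [Bool.eq_not_iff] using huv)
  obtain ⟨k, hk⟩ := hodd
  rw [← dist_eq_one_iff_adj]
  omega

theorem Coloring.adj_iff_ne_of_diam_eq_two {G : SimpleGraph V} (C : G.Coloring Bool)
    (hdiam : G.diam = 2) {u v : V} : G.Adj u v ↔ C u ≠ C v := by
  have hfin : G.ediam ≠ ⊤ := ediam_ne_top_of_diam_ne_zero (by omega)
  refine ⟨C.valid, fun huv => C.adj_of_ne_of_dist_le_two huv ?_ (hdiam ▸ dist_le_diam hfin)⟩
  exact preconnected_of_ediam_ne_top hfin u v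

def isoCompleteBipartiteGraphOfAdjIff {G : SimpleGraph V} {c : V → Bool}
    (hadj : ∀ u v, G.Adj u v ↔ c u ≠ c v) :
    G ≃g completeBipartiteGraph {v // c v} {v // ¬ c v} :=
  RelIso.symm
    { toEquiv := Equiv.sumCompl fun v => c v
      map_rel_iff' := by
        rintro (⟨u, hu⟩ | ⟨u, hu⟩) (⟨v, hv⟩ | ⟨v, hv⟩) <;> simp_all }

theorem nonempty_iso_completeBipartiteGraph_of_adj_iff [Fintype V] [Nonempty V]
    {G : SimpleGraph V} [DecidableRel G.Adj] {c : V → Bool}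
    (hadj : ∀ u v, G.Adj u v ↔ c u ≠ c v) :
    Nonempty (G ≃g completeBipartiteGraph (Fin G.maxDegree)
      (Fin (Fintype.card V - G.maxDegree))) := by
  obtain ⟨w, hw⟩ := G.exists_maximal_degree_vertex
  -- recolour so that the neighbours of `w` form the `true` class
  let d v := c v != c w
  have hadj' : ∀ u v, G.Adj u v ↔ d u ≠ d v := by
    intro u v
    rw [hadj]
    simp only [d]
    cases c u <;> cases c v <;> cases c w <;> decide
  have hleft : Fintype.card {v // d v} = G.maxDegree := by
    rw [hw, ← card_neighborSet_eq_degree]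
    exact Fintype.card_congr (Equiv.subtypeEquivRight fun v => by simp [d, hadj, ne_comm])
  have hright : Fintype.card {v // ¬ d v} = Fintype.card V - G.maxDegree := by
    rw [Fintype.card_subtype_compl, hleft]
  exact ⟨(isoCompleteBipartiteGraphOfAdjIff hadj').trans (completeBipartiteGraphCongr
    (Fintype.equivFinOfCardEq hleft) (Fintype.equivFinOfCardEq hright))⟩

section CompleteBipartite

variable [Fintype V] [Fintype W] [DecidableRel (completeBipartiteGraph V W).Adj]

theorem degree_completeBipartiteGraph_inl (a : V) :
    (completeBipartiteGraph V W).degree (.inl a) = Fintype.card W := by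
  rw [← card_neighborFinset_eq_degree,
    show (completeBipartiteGraph V W).neighborFinset (.inl a) = Finset.univ.map .inr by
      ext (x | x) <;> simp,
    Finset.card_map, Finset.card_univ]

theorem degree_completeBipartiteGraph_inr (b : W) :
    (completeBipartiteGraph V W).degree (.inr b) = Fintype.card V := by
  rw [← card_neighborFinset_eq_degree,
    show (completeBipartiteGraph V W).neighborFinset (.inr b) = Finset.univ.map .inl by
      ext (x | x) <;> simp,
    Finset.card_map, Finset.card_univ]

theorem maxDegree_completeBipartiteGraph [Nonempty W] (h : Fintype.card W ≤ Fintype.card V) :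
    (completeBipartiteGraph V W).maxDegree = Fintype.card V := by
  refine le_antisymm (maxDegree_le_of_forall_degree_le _ _ ?_) ?_
  · rintro (a | b)
    · simpa only [degree_completeBipartiteGraph_inl] using h
    · rw [degree_completeBipartiteGraph_inr]
  · obtain ⟨b⟩ := ‹Nonempty W›
    exact degree_completeBipartiteGraph_inr (V := V) b ▸ degree_le_maxDegree _ _

end CompleteBipartite

theorem ediam_completeBipartiteGraph_le_two [Nonempty V] [Nonempty W] :
    (completeBipartiteGraph V W).ediam ≤ 2 := by
  obtain ⟨a⟩ := ‹Nonempty V›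
  obtain ⟨b⟩ := ‹Nonempty W›
  refine ediam_le_of_edist_le ?_
  rintro (x | x) (y | y)
  · exact edist_le_two_of_adj_of_adj (w := .inr b) (by simp) (by simp)
  · exact (edist_eq_one_iff_adj.mpr (by simp)).trans_le (by norm_num)
  · exact (edist_eq_one_iff_adj.mpr (by simp)).trans_le (by norm_num)
  · exact edist_le_two_of_adj_of_adj (w := .inl a) (by simp) (by simp)

theorem diam_completeBipartiteGraph [Nontrivial V] [Nonempty W] :
    (completeBipartiteGraph V W).diam = 2 := by
  obtain ⟨a, a', haa'⟩ := exists_pair_ne V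
  have hle := ediam_completeBipartiteGraph_le_two (V := V) (W := W)
  have hne_top : (completeBipartiteGraph V W).ediam ≠ ⊤ := ne_top_of_le_ne_top (by simp) hle
  have : Nontrivial (V ⊕ W) := Sum.inl_injective.nontrivial
  have hne_zero := diam_ne_zero_of_ediam_ne_top hne_top
  have hne_one : (completeBipartiteGraph V W).diam ≠ 1 := by
    rw [Ne, diam_eq_one]
    intro htop
    have hadj : (completeBipartiteGraph V W).Adj (.inl a) (.inl a') :=
      htop ▸ (top_adj _ _).mpr (by simpa using haa')
    simp at hadj
  have : (completeBipartiteGraph V W).diam ≤ 2 := by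
    simpa [diam] using ENat.toNat_le_toNat hle (by simp)
  omega

end SimpleGraph

open scoped Classical

open SimpleGraph

theorem stmt6_general (Δ ε : ℕ) (hΔ : 2 ≤ Δ) (hε2 : ε ≤ Δ - 1) :
    (completeBipartiteGraph (Fin Δ) (Fin (Δ - ε))).maxDegree = Δ ∧
    (completeBipartiteGraph (Fin Δ) (Fin (Δ - ε))).diam = 2 ∧
    Fintype.card (Fin Δ ⊕ Fin (Δ - ε)) = 2 * Δ - ε ∧
    (∀ (V : Type) [Fintype V] (G : SimpleGraph V) [DecidableRel G.Adj]
        (c : V → Bool), (∀ u v, G.Adj u v → c u ≠ c v) →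
      G.maxDegree = Δ → G.diam = 2 → Fintype.card V = 2 * Δ - ε →
      Nonempty (G ≃g completeBipartiteGraph (Fin Δ) (Fin (Δ - ε)))) := by
  have : Nontrivial (Fin Δ) := Fin.nontrivial_iff_two_le.mpr hΔ
  have : Nonempty (Fin (Δ - ε)) := Fin.pos_iff_nonempty.mp (by omega)
  refine ⟨?_, diam_completeBipartiteGraph, by simp only [Fintype.card_sum, Fintype.card_fin]; omega, ?_⟩
  · simpa using maxDegree_completeBipartiteGraph (V := Fin Δ) (W := Fin (Δ - ε)) (by simp)
  intro V _ G _ c hc hmax hdiam hcard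
  have : Nonempty V := (nontrivial_of_diam_ne_zero (G := G) (by omega)).to_nonempty
  have hiso := nonempty_iso_completeBipartiteGraph_of_adj_iff (c := c) fun _ _ =>
    (Coloring.mk c (hc _ _)).adj_iff_ne_of_diam_eq_two hdiam
  have hsub : 2 * Δ - ε - Δ = Δ - ε := by omega
  rwa [hmax, hcard, hsub] at hiso

/-- For `Δ ≥ 2` and `1 ≤ ε ≤ Δ−1`, the complete bipartite graph `K_{Δ,Δ−ε}`
has maximum degree `Δ`, diameter 2, and order `2Δ − ε`; moreover these are the
only bipartite `(Δ,2,−ε)`-graphs. -/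
theorem stmt6 (Δ ε : ℕ) (hΔ : 2 ≤ Δ) (hε1 : 1 ≤ ε) (hε2 : ε ≤ Δ - 1) :
    (completeBipartiteGraph (Fin Δ) (Fin (Δ - ε))).maxDegree = Δ ∧
    (completeBipartiteGraph (Fin Δ) (Fin (Δ - ε))).diam = 2 ∧
    Fintype.card (Fin Δ ⊕ Fin (Δ - ε)) = 2 * Δ - ε ∧
    (∀ (V : Type) [Fintype V] (G : SimpleGraph V) [DecidableRel G.Adj]
        (c : V → Bool), (∀ u v, G.Adj u v → c u ≠ c v) →
      G.maxDegree = Δ → G.diam = 2 → Fintype.card V = 2 * Δ - ε →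
      Nonempty (G ≃g completeBipartiteGraph (Fin Δ) (Fin (Δ - ε)))) :=
  stmt6_general Δ ε hΔ hε2
end

section
/- For d ≥ 3 and odd D ≥ 5, the integer N = (2·∑_{i=0}^{D-1}(d-1)^i − 4)/(D−1), when it is an integer, is odd. -/
/-!
Write `S = ∑_{i<D} (d-1)^i`. Since `D` is odd, `S` is odd whatever the parity of `d - 1`, so
`2S - 4 = 2(S - 2)` with `S - 2` odd. As `D - 1 = 2m` is even, `(D - 1) q = 2(S - 2)` reduces to
`m q = S - 2`, which forces `q` to be odd.
-/

open Finset

theorem Nat.odd_geom_sum {n : ℕ} (a : ℕ) (hn : Odd n) : Odd (∑ i ∈ range n, a ^ i) := by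
  rcases Nat.even_or_odd a with ha | ha
  · obtain ⟨m, rfl⟩ : ∃ m, n = m + 1 := Nat.exists_eq_succ_of_ne_zero hn.pos.ne'
    rw [sum_range_succ', pow_zero]
    exact (even_sum _ fun i _ ↦ ha.pow_of_ne_zero i.succ_ne_zero).add_one
  · rw [odd_sum_iff_odd_card_odd, filter_true_of_mem fun i _ ↦ ha.pow, card_range]
    exact hn

theorem Nat.two_le_geom_sum {a n : ℕ} (ha : 1 ≤ a) (hn : 2 ≤ n) : 2 ≤ ∑ i ∈ range n, a ^ i :=
  calc 2 ≤ ∑ i ∈ range 2, a ^ i := by simp [sum_range_succ]; omega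
    _ ≤ ∑ i ∈ range n, a ^ i := sum_le_sum_of_subset (range_subset_range.mpr hn)

theorem Nat.odd_div_of_even_of_dvd_two_mul {n k : ℕ} (hn : Even n) (hk : Odd k)
    (hdvd : n ∣ 2 * k) : Odd (2 * k / n) := by
  obtain ⟨q, hq⟩ := hdvd
  obtain ⟨m, rfl⟩ := hn.two_dvd
  have hkq : k = m * q := by rw [mul_assoc] at hq; exact Nat.eq_of_mul_eq_mul_left two_pos hq
  have hm : 0 < m := Nat.pos_of_mul_pos_right (hkq ▸ hk.pos)
  rw [hq, Nat.mul_div_cancel_left q (by positivity)]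
  exact Nat.Odd.of_mul_right (hkq ▸ hk)

/-- For `d ≥ 3` and odd `D ≥ 5`: if `D−1` divides `2∑_{i<D}(d-1)^i − 4`,
then the quotient is odd. -/
theorem stmt13 (d D : ℕ) (hd : 3 ≤ d) (hD : 5 ≤ D) (hodd : Odd D)
    (hdvd : (D - 1) ∣ (2 * ∑ i ∈ Finset.range D, (d - 1) ^ i - 4)) :
    Odd ((2 * ∑ i ∈ Finset.range D, (d - 1) ^ i - 4) / (D - 1)) := by
  set S := ∑ i ∈ range D, (d - 1) ^ i
  have hS : Odd S := Nat.odd_geom_sum (d - 1) hodd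
  have hS2 : 2 ≤ S := Nat.two_le_geom_sum (by omega) (by omega)
  have hsplit : 2 * S - 4 = 2 * (S - 2) := by omega
  have hDeven : Even (D - 1) := Nat.Odd.sub_odd hodd odd_one
  rw [hsplit] at hdvd ⊢
  exact Nat.odd_div_of_even_of_dvd_two_mul hDeven (Nat.Odd.sub_even hS2 hS even_two) hdvd
end
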